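/- Let M₃ be the 3×3 Hermitian matrix with rows (3, 0, 6i), (0, 10, 0), (-6i, 0, 42), let M₂(r) be the 2×3 matrix with rows (ir(1-r²), -2+5r²-r⁴, -6r+7r³-r⁵) and (-ir(1-r²), -2+5r²-r⁴, 6r-7r³+r⁵), and let M₁(r) be the 2×2 matrix with diagonal entries e^{r²} and off-diagonal entries e^{-r²}(1-4r²). Then the Schur complement M(r) = M₃ - M₂(r)* M₁(r)⁻¹ M₂(r) converges, as r → 0⁺, to the matrix with rows (8/3, 0, 4i), (0, 6, 0), (-4i, 0, 30). -/

import Mathlib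

open Complex Filter Matrix

/-- The 2×2 covariance block of `(F(ir), F(-ir))`. -/
noncomputable def M1 (r : ℝ) : Matrix (Fin 2) (Fin 2) ℂ :=
  !![(Real.exp (r ^ 2) : ℂ), (Real.exp (-r ^ 2) * (1 - 4 * r ^ 2) : ℝ);
     (Real.exp (-r ^ 2) * (1 - 4 * r ^ 2) : ℝ), (Real.exp (r ^ 2) : ℂ)]

/-- The 2×3 cross-covariance block. -/
noncomputable def M2 (r : ℝ) : Matrix (Fin 2) (Fin 3) ℂ :=
  !![Complex.I * r * (1 - (r : ℂ) ^ 2), -2 + 5 * (r : ℂ) ^ 2 - (r : ℂ) ^ 4,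
        -6 * r + 7 * (r : ℂ) ^ 3 - (r : ℂ) ^ 5;
     -(Complex.I * r * (1 - (r : ℂ) ^ 2)), -2 + 5 * (r : ℂ) ^ 2 - (r : ℂ) ^ 4,
        6 * r - 7 * (r : ℂ) ^ 3 + (r : ℂ) ^ 5]

/-- The 3×3 covariance block of `(F^{(1,0)}(0), F^{(0,2)}(0), F^{(0,3)}(0))`. -/
noncomputable def M3 : Matrix (Fin 3) (Fin 3) ℂ :=
  !![3, 0, 6 * Complex.I; 0, 10, 0; -6 * Complex.I, 0, 42]

/-- The limiting conditional covariance matrix `M⁰`. -/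
noncomputable def M0 : Matrix (Fin 3) (Fin 3) ℂ :=
  !![8 / 3, 0, 4 * Complex.I; 0, 6, 0; -4 * Complex.I, 0, 30]

/- Auxiliary definitions and lemmas -/

noncomputable def sf (r : ℝ) : ℝ := Real.exp (r ^ 2) - Real.exp (-r ^ 2) * (1 - 4 * r ^ 2)
noncomputable def pf (r : ℝ) : ℝ := Real.exp (r ^ 2) + Real.exp (-r ^ 2) * (1 - 4 * r ^ 2)

lemma sf_pos {r : ℝ} (hr : r ≠ 0) : 0 < sf r := by
  have ht : 0 < r ^ 2 := by positivity
  have h1 : Real.exp (-r ^ 2) < Real.exp (r ^ 2) := Real.exp_lt_exp.mpr (by linarith)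
  have h2 : (0:ℝ) < Real.exp (-r ^ 2) := Real.exp_pos _
  unfold sf
  nlinarith

lemma pf_pos (r : ℝ) : 0 < pf r := by
  have ht : 0 ≤ r ^ 2 := by positivity
  have h1 : r ^ 2 + 1 ≤ Real.exp (r ^ 2) := Real.add_one_le_exp _
  have h2 : (0:ℝ) < Real.exp (-r ^ 2) := Real.exp_pos _
  have h3 : Real.exp (-r ^ 2) * Real.exp (r ^ 2) = 1 := by
    rw [← Real.exp_add]; simp
  unfold pf
  nlinarith [sq_nonneg (r ^ 2 - 1), mul_le_mul_of_nonneg_left h1 h2.le]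

lemma M1_inv (r : ℝ) :
    (M1 r)⁻¹ = ((sf r * pf r : ℝ)⁻¹ : ℂ) •
      !![(Real.exp (r ^ 2) : ℂ), -(Real.exp (-r ^ 2) * (1 - 4 * r ^ 2) : ℝ);
         -(Real.exp (-r ^ 2) * (1 - 4 * r ^ 2) : ℝ), (Real.exp (r ^ 2) : ℂ)] := by
  simp only [M1, Matrix.inv_def, Matrix.adjugate_fin_two_of, Matrix.det_fin_two_of,
    Ring.inverse_eq_inv']
  congr 1
  push_cast [sf, pf]
  ring

lemma conjT_2x3 (a b c d e f : ℂ) :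
    (!![a, b, c; d, e, f]).conjTranspose =
      !![star a, star d; star b, star e; star c, star f] := by
  ext i j; fin_cases i <;> fin_cases j <;> rfl

lemma mul_3x2_2x2 {α : Type*} [NonUnitalNonAssocSemiring α] (a b c d e f g h i j : α) :
    !![a, b; c, d; e, f] * !![g, h; i, j] =
      !![a*g + b*i, a*h + b*j; c*g + d*i, c*h + d*j; e*g + f*i, e*h + f*j] := by
  ext i' j'; fin_cases i' <;> fin_cases j' <;> simp [Matrix.mul_apply, Fin.sum_univ_succ]

lemma mul_3x2_2x3 {α : Type*} [NonUnitalNonAssocSemiring α]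
    (a b c d e f g h i j k l : α) :
    !![a, b; c, d; e, f] * !![g, h, i; j, k, l] =
      !![a*g + b*j, a*h + b*k, a*i + b*l;
         c*g + d*j, c*h + d*k, c*i + d*l;
         e*g + f*j, e*h + f*k, e*i + f*l] := by
  ext i' j'; fin_cases i' <;> fin_cases j' <;> simp [Matrix.mul_apply, Fin.sum_univ_succ]

lemma smul_2x2 (x a b c d : ℂ) :
    x • !![a, b; c, d] = !![x*a, x*b; x*c, x*d] := by
  ext i j; fin_cases i <;> fin_cases j <;> simp

lemma sub_3x3 (a b c d e f g h i a' b' c' d' e' f' g' h' i' : ℂ) :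
    !![a,b,c;d,e,f;g,h,i] - !![a',b',c';d',e',f';g',h',i'] =
      !![a-a',b-b',c-c';d-d',e-e',f-f';g-g',h-h',i-i'] := by
  ext i' j'; fin_cases i' <;> fin_cases j' <;> simp

lemma eq_3x3 {a b c d e f g h i a' b' c' d' e' f' g' h' i' : ℂ}
    (h1 : a = a') (h2 : b = b') (h3 : c = c') (h4 : d = d') (h5 : e = e')
    (h6 : f = f') (h7 : g = g') (h8 : h = h') (h9 : i = i') :
    !![a,b,c;d,e,f;g,h,i] = !![a',b',c';d',e',f';g',h',i'] := by
  subst_vars; rfl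

/-- Explicit form of the Schur complement. -/
noncomputable def G (r : ℝ) : Matrix (Fin 3) (Fin 3) ℂ :=
  !![((3 - 2 * r ^ 2 * (1 - r ^ 2) ^ 2 / sf r : ℝ) : ℂ), 0,
        ((6 - 2 * r ^ 2 * (1 - r ^ 2) * (6 - 7 * r ^ 2 + r ^ 4) / sf r : ℝ) : ℂ) * Complex.I;
     0, ((10 - 2 * (2 - 5 * r ^ 2 + r ^ 4) ^ 2 / pf r : ℝ) : ℂ), 0;
     -(((6 - 2 * r ^ 2 * (1 - r ^ 2) * (6 - 7 * r ^ 2 + r ^ 4) / sf r : ℝ) : ℂ) * Complex.I), 0,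
        ((42 - 2 * r ^ 2 * (6 - 7 * r ^ 2 + r ^ 4) ^ 2 / sf r : ℝ) : ℂ)]

set_option maxHeartbeats 1000000 in
lemma schur_eq {r : ℝ} (hr : r ≠ 0) :
    M3 - (M2 r).conjTranspose * (M1 r)⁻¹ * M2 r = G r := by
  have hs : (sf r : ℂ) ≠ 0 := by exact_mod_cast (sf_pos hr).ne'
  have hp : (pf r : ℂ) ≠ 0 := by exact_mod_cast (pf_pos r).ne'
  have hsf : (sf r : ℂ) = Complex.exp ((r:ℂ) ^ 2) - Complex.exp (-(r:ℂ) ^ 2) * (1 - 4 * (r:ℂ) ^ 2) := by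
    unfold sf; push_cast; ring_nf
  have hpf : (pf r : ℂ) = Complex.exp ((r:ℂ) ^ 2) + Complex.exp (-(r:ℂ) ^ 2) * (1 - 4 * (r:ℂ) ^ 2) := by
    unfold pf; push_cast; ring_nf
  have hs' : Complex.exp ((r:ℂ) ^ 2) - Complex.exp (-(r:ℂ) ^ 2) * (1 - 4 * (r:ℂ) ^ 2) ≠ 0 :=
    hsf ▸ hs
  have hp' : Complex.exp ((r:ℂ) ^ 2) + Complex.exp (-(r:ℂ) ^ 2) * (1 - 4 * (r:ℂ) ^ 2) ≠ 0 :=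
    hpf ▸ hp
  have hd : (r:ℂ) ^ 2 * Complex.exp (-(r:ℂ) ^ 2) ^ 2 * 8 - (r:ℂ) ^ 4 * Complex.exp (-(r:ℂ) ^ 2) ^ 2 * 16 +
      (Complex.exp ((r:ℂ) ^ 2) ^ 2 - Complex.exp (-(r:ℂ) ^ 2) ^ 2) ≠ 0 := by
    intro h
    exact mul_ne_zero hs' hp' (by linear_combination h)
  rw [M1_inv, M2, M3, G, conjT_2x3, smul_2x2, mul_3x2_2x2, mul_3x2_2x3, sub_3x3]
  apply eq_3x3 <;>
  · push_cast [Complex.ofReal_exp]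
    simp only [star_def, map_neg, map_add, map_sub, _root_.map_mul, map_pow, _root_.map_one,
      map_ofNat, Complex.conj_ofReal, Complex.conj_I, Complex.ofReal_exp]
    rw [hsf, hpf]
    generalize Complex.exp ((r:ℂ) ^ 2) = A at hs' hp' ⊢
    generalize Complex.exp (-(r:ℂ) ^ 2) = B at hs' hp' ⊢
    have hs2 : A - B * (1 - (r:ℂ) ^ 2 * 4) ≠ 0 := by convert hs' using 3; ring
    have hp2 : A + B * (1 - (r:ℂ) ^ 2 * 4) ≠ 0 := by convert hp' using 3; ring
    field_simp [hs2, hp2]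
    ring_nf
    try (simp only [Complex.I_sq]; ring_nf)

lemma hasDerivAt_h : HasDerivAt (fun t : ℝ => Real.exp t - Real.exp (-t) * (1 - 4 * t)) 6 0 := by
  have d1 : HasDerivAt Real.exp 1 0 := by simpa using Real.hasDerivAt_exp 0
  have d2 : HasDerivAt (fun t : ℝ => Real.exp (-t)) (-1) 0 := by
    simpa [Function.comp_def] using (Real.hasDerivAt_exp (-0)).comp 0 (hasDerivAt_neg 0)
  have d3 : HasDerivAt (fun t : ℝ => 1 - 4 * t) (-4) 0 := by
    simpa using ((hasDerivAt_id (0:ℝ)).const_mul 4).const_sub 1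
  have d4 := d2.mul d3
  have d5 := d1.sub d4
  exact d5.congr_deriv (by norm_num)

lemma tendsto_key :
    Tendsto (fun r : ℝ => r ^ 2 / sf r) (nhdsWithin 0 (Set.Ioi 0)) (nhds (6⁻¹ : ℝ)) := by
  have hslope : Tendsto (fun t : ℝ => (Real.exp t - Real.exp (-t) * (1 - 4 * t)) / t)
      (nhdsWithin 0 {(0:ℝ)}ᶜ) (nhds 6) := by
    have := hasDerivAt_iff_tendsto_slope.mp hasDerivAt_h
    refine this.congr' ?_
    filter_upwards [self_mem_nhdsWithin] with t ht
    rw [slope_def_field]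
    field_simp
    norm_num [mul_comm]
  have hsq : Tendsto (fun r : ℝ => r ^ 2) (nhdsWithin 0 (Set.Ioi 0)) (nhdsWithin 0 {(0:ℝ)}ᶜ) := by
    rw [tendsto_nhdsWithin_iff]
    constructor
    · have : Tendsto (fun r : ℝ => r ^ 2) (nhds 0) (nhds ((0:ℝ) ^ 2)) :=
        (continuous_pow 2).tendsto 0
      simpa using this.mono_left nhdsWithin_le_nhds
    · filter_upwards [self_mem_nhdsWithin] with r hr
      exact pow_ne_zero 2 (ne_of_gt hr)
  have h1 : Tendsto (fun r : ℝ => sf r / r ^ 2) (nhdsWithin 0 (Set.Ioi 0)) (nhds 6) :=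
    hslope.comp hsq
  have h2 := h1.inv₀ (by norm_num)
  refine h2.congr fun r => ?_
  rw [inv_div]

lemma tendsto_3x3 {β : Type*} {l : Filter β}
    {f00 f01 f02 f10 f11 f12 f20 f21 f22 : β → ℂ}
    {a00 a01 a02 a10 a11 a12 a20 a21 a22 : ℂ}
    (h00 : Tendsto f00 l (nhds a00)) (h01 : Tendsto f01 l (nhds a01))
    (h02 : Tendsto f02 l (nhds a02)) (h10 : Tendsto f10 l (nhds a10))
    (h11 : Tendsto f11 l (nhds a11)) (h12 : Tendsto f12 l (nhds a12))
    (h20 : Tendsto f20 l (nhds a20)) (h21 : Tendsto f21 l (nhds a21))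
    (h22 : Tendsto f22 l (nhds a22)) :
    Tendsto (fun x => !![f00 x, f01 x, f02 x; f10 x, f11 x, f12 x; f20 x, f21 x, f22 x]) l
      (nhds !![a00, a01, a02; a10, a11, a12; a20, a21, a22]) := by
  apply tendsto_pi_nhds.mpr
  intro i
  rw [tendsto_pi_nhds]
  intro j
  fin_cases i <;> fin_cases j <;> simpa using ‹_›

lemma tendsto_G : Tendsto G (nhdsWithin 0 (Set.Ioi 0)) (nhds M0) := by
  have poly : ∀ f : ℝ → ℝ, Continuous f →
      Tendsto f (nhdsWithin 0 (Set.Ioi 0)) (nhds (f 0)) := fun f hf =>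
    (hf.tendsto 0).mono_left nhdsWithin_le_nhds
  have key := tendsto_key
  have h00 : Tendsto (fun r : ℝ => 3 - 2 * r ^ 2 * (1 - r ^ 2) ^ 2 / sf r)
      (nhdsWithin 0 (Set.Ioi 0)) (nhds (8/3)) := by
    have hc := poly (fun r => 2 * (1 - r ^ 2) ^ 2) (by continuity)
    have := (tendsto_const_nhds (x := (3:ℝ))).sub (hc.mul key)
    norm_num at this
    refine this.congr fun r => ?_
    ring
  have h02 : Tendsto (fun r : ℝ => 6 - 2 * r ^ 2 * (1 - r ^ 2) * (6 - 7 * r ^ 2 + r ^ 4) / sf r)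
      (nhdsWithin 0 (Set.Ioi 0)) (nhds 4) := by
    have hc := poly (fun r => 2 * (1 - r ^ 2) * (6 - 7 * r ^ 2 + r ^ 4)) (by continuity)
    have := (tendsto_const_nhds (x := (6:ℝ))).sub (hc.mul key)
    norm_num at this
    refine this.congr fun r => ?_
    ring
  have h11 : Tendsto (fun r : ℝ => 10 - 2 * (2 - 5 * r ^ 2 + r ^ 4) ^ 2 / pf r)
      (nhdsWithin 0 (Set.Ioi 0)) (nhds 6) := by
    have hnum := poly (fun r => 2 * (2 - 5 * r ^ 2 + r ^ 4) ^ 2) (by continuity)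
    have hden : Continuous pf := by unfold pf; continuity
    have hpf0 : pf 0 = 2 := by norm_num [pf]
    have hdiv := hnum.div (poly pf hden) (by rw [hpf0]; norm_num)
    have h := (tendsto_const_nhds (x := (10:ℝ))).sub hdiv
    have hval : (10:ℝ) - (fun r : ℝ => 2 * (2 - 5 * r ^ 2 + r ^ 4) ^ 2) 0 / pf 0 = 6 := by
      rw [hpf0]; norm_num
    rw [hval] at h
    exact h
  have h22 : Tendsto (fun r : ℝ => 42 - 2 * r ^ 2 * (6 - 7 * r ^ 2 + r ^ 4) ^ 2 / sf r)
      (nhdsWithin 0 (Set.Ioi 0)) (nhds 30) := by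
    have hc := poly (fun r => 2 * (6 - 7 * r ^ 2 + r ^ 4) ^ 2) (by continuity)
    have := (tendsto_const_nhds (x := (42:ℝ))).sub (hc.mul key)
    norm_num at this
    refine this.congr fun r => ?_
    ring
  have cast : ∀ {f : ℝ → ℝ} {a : ℝ}, Tendsto f (nhdsWithin 0 (Set.Ioi 0)) (nhds a) →
      Tendsto (fun r => (f r : ℂ)) (nhdsWithin 0 (Set.Ioi 0)) (nhds (a : ℂ)) := fun h =>
    (Complex.continuous_ofReal.tendsto _).comp h
  unfold G M0
  apply tendsto_3x3
  · simpa using cast h00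
  · exact tendsto_const_nhds
  · simpa using (cast h02).mul (tendsto_const_nhds (x := Complex.I))
  · exact tendsto_const_nhds
  · simpa using cast h11
  · exact tendsto_const_nhds
  · have := ((cast h02).mul (tendsto_const_nhds (x := Complex.I))).neg
    refine this.congr' (by rfl) |>.mono_right ?_
    simp
  · exact tendsto_const_nhds
  · simpa using cast h22

/-- The Schur complement `M(r) = M₃ - M₂(r)* M₁(r)⁻¹ M₂(r)` converges to `M⁰`
as `r → 0⁺`. -/
theorem stmt_18 :
    Tendsto (fun r : ℝ => M3 - (M2 r).conjTranspose * (M1 r)⁻¹ * M2 r)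
      (nhdsWithin 0 (Set.Ioi 0)) (nhds M0) := by
  refine tendsto_G.congr' ?_
  filter_upwards [self_mem_nhdsWithin] with r hr
  exact (schur_eq (ne_of_gt hr)).symm
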